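/- arXiv:2502.11226 — 4 statements merged into one kernel-verified Lean document; each statement's English description precedes it below -/
import Mathlib

section
/- Let M be a conical refinement commutative monoid and I an order ideal of M. For elements a, b ∈ M, the sum a + b is incomparable with every nonzero element of I if and only if both a and b are incomparable with every nonzero element of I (where we interpret the condition as vacuously true for zero elements). -/
/-- A commutative monoid is conical if `a + b = 0` implies `a = 0` and `b = 0`. -/
def IsConical (M : Type*) [AddCommMonoid M] : Prop :=
  ∀ a b : M, a + b = 0 → a = 0 ∧ b = 0

/-- The refinement property for a commutative monoid. -/
def IsRefinement (M : Type*) [AddCommMonoid M] : Prop :=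
  ∀ a₀ a₁ b₀ b₁ : M, a₀ + a₁ = b₀ + b₁ →
    ∃ c₀₀ c₀₁ c₁₀ c₁₁ : M,
      a₀ = c₀₀ + c₀₁ ∧ a₁ = c₁₀ + c₁₁ ∧ b₀ = c₀₀ + c₁₀ ∧ b₁ = c₀₁ + c₁₁

variable {M : Type*} [AddCommMonoid M]

/-- The algebraic preorder: `a ≤ b` iff `b = a + c` for some `c`. -/
def AlgLE (a b : M) : Prop := ∃ c, b = a + c

/-- Strict algebraic order: `a < b` iff `b = a + c` for some nonzero `c`. -/
def AlgLT (a b : M) : Prop := ∃ c, c ≠ 0 ∧ b = a + c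

/-- Two elements are comparable if they are equal or one is strictly below the other. -/
def CmpRel (a b : M) : Prop := a = b ∨ AlgLT a b ∨ AlgLT b a

/-- `a ∥ I` : `a` is incomparable with every nonzero element of `I`. -/
def PerpTo (a : M) (I : Set M) : Prop := ∀ x ∈ I, x ≠ 0 → ¬ CmpRel a x

/-- An order ideal: a submonoid which is downward closed for the algebraic preorder. -/
def IsOrderIdeal (I : Set M) : Prop :=
  (0 : M) ∈ I ∧ (∀ a b : M, a ∈ I → b ∈ I → a + b ∈ I) ∧
    ∀ a b : M, b ∈ I → AlgLE a b → a ∈ I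

/-- The orthogonal set `I^⊥ = {a | a ∥ I} ∪ {0}`. -/
def perpSet (I : Set M) : Set M := {a : M | a = 0 ∨ PerpTo a I}

variable (Γ : Type*) [CommGroup Γ] [DistribMulAction Γ M]

/-
An element `a` is incomparable with all nonzero elements of the order ideal `I` exactly when
no nonzero element of `I` lies below `a`: if `a < x ∈ I` then `a ∈ I` itself lies below `a`.
In this form the forward direction is transitivity of `≤`, and the converse is Riesz
decomposition: refinement splits any `x ≤ a + b` as `x = a' + b'` with `a' ≤ a`, `b' ≤ b`,
and both pieces stay in `I`.
-/

section AlgebraicOrder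

variable {M : Type*} [AddCommMonoid M]

theorem AlgLE.refl (a : M) : AlgLE a a := ⟨0, (add_zero a).symm⟩

theorem AlgLE.trans {a b c : M} : AlgLE a b → AlgLE b c → AlgLE a c := by
  rintro ⟨d, rfl⟩ ⟨e, rfl⟩
  exact ⟨d + e, add_assoc a d e⟩

theorem algLE_add_right (a b : M) : AlgLE a (a + b) := ⟨b, rfl⟩

theorem algLE_add_left (a b : M) : AlgLE b (a + b) := ⟨a, add_comm a b⟩

theorem AlgLT.algLE {a b : M} : AlgLT a b → AlgLE a b := fun ⟨c, _, h⟩ => ⟨c, h⟩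

theorem AlgLE.cmpRel {a b : M} : AlgLE a b → CmpRel a b := by
  rintro ⟨c, rfl⟩
  rcases eq_or_ne c 0 with rfl | hc
  · exact Or.inl (add_zero a).symm
  · exact Or.inr (Or.inl ⟨c, hc, rfl⟩)

theorem CmpRel.symm {a b : M} : CmpRel a b → CmpRel b a := by
  rintro (rfl | h | h)
  · exact Or.inl rfl
  · exact Or.inr (Or.inr h)
  · exact Or.inr (Or.inl h)

theorem eq_zero_of_algLE_zero (hcon : IsConical M) {a : M} : AlgLE a 0 → a = 0 :=
  fun ⟨c, h⟩ => (hcon a c h.symm).1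

theorem IsRefinement.exists_eq_add_of_algLE_add (href : IsRefinement M) {x a b : M}
    (h : AlgLE x (a + b)) : ∃ a' b', x = a' + b' ∧ AlgLE a' a ∧ AlgLE b' b := by
  obtain ⟨c, hc⟩ := h
  obtain ⟨c₀₀, c₀₁, c₁₀, c₁₁, ha, hb, hx, -⟩ := href a b x c hc
  exact ⟨c₀₀, c₁₀, hx, ⟨c₀₁, ha⟩, ⟨c₁₁, hb⟩⟩

theorem perpTo_iff_forall_algLE (hcon : IsConical M) {I : Set M}
    (hI : ∀ x y, y ∈ I → AlgLE x y → x ∈ I) (a : M) :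
    (a ≠ 0 → PerpTo a I) ↔ ∀ x ∈ I, AlgLE x a → x = 0 := by
  constructor
  · intro hperp x hx hxa
    by_contra hx0
    have ha0 : a ≠ 0 := fun ha => hx0 (eq_zero_of_algLE_zero hcon (ha ▸ hxa))
    exact hperp ha0 x hx hx0 hxa.cmpRel.symm
  · rintro hbelow ha0 x hx hx0 (rfl | hax | hxa)
    · exact ha0 (hbelow a hx (AlgLE.refl a))
    · exact ha0 (hbelow a (hI a x hx hax.algLE) (AlgLE.refl a))
    · exact hx0 (hbelow x hx hxa.algLE)

end AlgebraicOrder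

theorem stmt_1 {M : Type*} [AddCommMonoid M]
    (hcon : IsConical M) (href : IsRefinement M)
    (I : Set M) (hI : IsOrderIdeal I) (a b : M) :
    (a + b ≠ 0 → PerpTo (a + b) I) ↔
      ((a ≠ 0 → PerpTo a I) ∧ (b ≠ 0 → PerpTo b I)) := by
  simp only [perpTo_iff_forall_algLE hcon hI.2.2]
  constructor
  · intro h
    exact ⟨fun x hx hxa => h x hx (hxa.trans (algLE_add_right a b)),
      fun x hx hxb => h x hx (hxb.trans (algLE_add_left a b))⟩
  · rintro ⟨ha, hb⟩ x hx hxab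
    obtain ⟨a', b', rfl, ha'a, hb'b⟩ := href.exists_eq_add_of_algLE_add hxab
    have ha' : a' = 0 := ha a' (hI.2.2 _ _ hx (algLE_add_right a' b')) ha'a
    have hb' : b' = 0 := hb b' (hI.2.2 _ _ hx (algLE_add_left a' b')) hb'b
    rw [ha', hb', add_zero]
end

section
/- Let M be a conical refinement commutative Γ-monoid and {I_s}_{s∈S} a family of nonzero Γ-order ideals. The sum Σ_{s∈S} I_s is a direct sum (each I_t intersects the sum of the others trivially) if and only if the ideals are pairwise disjoint, i.e., I_s ∩ I_t = {0} for all s ≠ t. -/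
variable {M : Type*} [AddCommMonoid M]

variable (Γ : Type*) [CommGroup Γ] [DistribMulAction Γ M]

/-- A Γ-order ideal: an order ideal invariant under the action of Γ. -/
def IsGammaOrderIdeal (I : Set M) : Prop :=
  IsOrderIdeal I ∧ ∀ (g : Γ) (a : M), a ∈ I → g • a ∈ I

/-- An essential Γ-order ideal: meets every nonzero Γ-order ideal nontrivially. -/
def IsEssential (I : Set M) : Prop :=
  IsGammaOrderIdeal Γ I ∧
    ∀ J : Set M, IsGammaOrderIdeal Γ J → J ≠ {0} → I ∩ J ≠ {0}

/-- A uniform Γ-order ideal: nonzero, and any two nonzero Γ-order ideals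
contained in it intersect nontrivially. -/
def IsUniform (I : Set M) : Prop :=
  IsGammaOrderIdeal Γ I ∧ I ≠ {0} ∧
    ∀ J K : Set M, IsGammaOrderIdeal Γ J → IsGammaOrderIdeal Γ K →
      J ⊆ I → K ⊆ I → J ≠ {0} → K ≠ {0} → J ∩ K ≠ {0}

namespace IsOrderIdeal

variable {J : Set M}

theorem left_mem_of_add_mem (hJ : IsOrderIdeal J) {a b : M} (h : a + b ∈ J) : a ∈ J :=
  hJ.2.2 a (a + b) h ⟨b, rfl⟩

theorem right_mem_of_add_mem (hJ : IsOrderIdeal J) {a b : M} (h : a + b ∈ J) : b ∈ J :=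
  hJ.2.2 b (a + b) h ⟨a, add_comm a b⟩

theorem inter_eq_zero_of_inter_subset_zero (hJ : IsOrderIdeal J) {A : Set M}
    (hA : 0 ∈ A) (h : J ∩ A ⊆ {0}) : J ∩ A = {0} :=
  h.antisymm (Set.singleton_subset_iff.2 ⟨hJ.1, hA⟩)

/-- Each summand of an element of `J` lies in `J`, so a sum of elements of `A` that lies in `J`
is a sum of elements of `J ∩ A`. -/
theorem inter_closure_subset_zero (hJ : IsOrderIdeal J) {A : Set M} (h : J ∩ A ⊆ {0}) :
    J ∩ (AddSubmonoid.closure A : Set M) ⊆ {0} := by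
  rintro x ⟨hxJ, hxA⟩
  induction hxA using AddSubmonoid.closure_induction with
  | mem y hy => exact h ⟨hxJ, hy⟩
  | zero => rfl
  | add a b _ _ iha ihb =>
    rw [Set.mem_singleton_iff.1 (iha (hJ.left_mem_of_add_mem hxJ)),
      Set.mem_singleton_iff.1 (ihb (hJ.right_mem_of_add_mem hxJ)), add_zero]
    rfl

end IsOrderIdeal

theorem stmt_6_general {M : Type*} [AddCommMonoid M] (Γ : Type*) [CommGroup Γ]
    [DistribMulAction Γ M]
    {S : Type*} (I : S → Set M)
    (hI : ∀ s, IsGammaOrderIdeal Γ (I s)) :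
    (∀ t : S,
        I t ∩ ((AddSubmonoid.closure (⋃ s, ⋃ (_ : s ≠ t), I s) : AddSubmonoid M) : Set M)
          = {0}) ↔
      Pairwise fun s t => I s ∩ I t = {0} := by
  constructor
  · intro h s t hst
    have hsub : I s ⊆ AddSubmonoid.closure (⋃ s', ⋃ (_ : s' ≠ t), I s') :=
      (Set.subset_biUnion_of_mem (u := I) hst).trans AddSubmonoid.subset_closure
    refine (hI s).1.inter_eq_zero_of_inter_subset_zero (hI t).1.1 ?_
    rw [Set.inter_comm, ← h t]
    exact Set.inter_subset_inter_right _ hsub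
  · intro h t
    refine (hI t).1.inter_eq_zero_of_inter_subset_zero (AddSubmonoid.closure _).zero_mem ?_
    refine (hI t).1.inter_closure_subset_zero ?_
    rintro x ⟨hxt, hx⟩
    obtain ⟨s, hst, hxs⟩ := Set.mem_iUnion₂.1 hx
    exact (h hst).subset ⟨hxs, hxt⟩

theorem stmt_6 {M : Type*} [AddCommMonoid M] (Γ : Type*) [CommGroup Γ]
    [DistribMulAction Γ M]
    (hcon : IsConical M) (href : IsRefinement M)
    {S : Type*} (I : S → Set M)
    (hI : ∀ s, IsGammaOrderIdeal Γ (I s)) (hnz : ∀ s, I s ≠ {0}) :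
    (∀ t : S,
        I t ∩ ((AddSubmonoid.closure (⋃ s, ⋃ (_ : s ≠ t), I s) : AddSubmonoid M) : Set M)
          = {0}) ↔
      Pairwise fun s t => I s ∩ I t = {0} :=
  stmt_6_general Γ I hI
end

section
/- Let E be a row-finite directed graph, H ⊆ E⁰ a hereditary subset, and v ∈ E⁰ \ H. Then v belongs to the hereditary and saturated closure of H if and only if for every vertex w in the tree T(v) with w ∉ H, there is a nonzero but finite number of paths starting at w that flow to H. -/
/-! Directed graphs are given by types `V` (vertices), `E` (edges) and maps
`s r : E → V` (source and range). -/

/-- `PathTo s r u v l` : the list of edges `l` is a path from `u` to `v`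
(the empty list is the trivial path at `u = v`). -/
inductive PathTo {V E : Type*} (s r : E → V) : V → V → List E → Prop
  | nil (v : V) : PathTo s r v v []
  | cons (e : E) {w : V} {l : List E} :
      PathTo s r (r e) w l → PathTo s r (s e) w (e :: l)

variable {V E : Type*}

/-- `u ≥ v` : there is a finite path from `u` to `v`. -/
def Reach (s r : E → V) (u v : V) : Prop := ∃ l : List E, PathTo s r u v l

/-- A subset of vertices is hereditary if it is closed under ranges of edges. -/
def Hereditary (s r : E → V) (H : Set V) : Prop := ∀ e : E, s e ∈ H → r e ∈ H

/-- A subset of vertices is saturated if it contains every regular vertex all of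
whose out-neighbours lie in the set. -/
def Saturated (s r : E → V) (H : Set V) : Prop :=
  ∀ v : V, (∃ e, s e = v) → (∀ e, s e = v → r e ∈ H) → v ∈ H

/-- `R(H)` : the set of vertices from which there is a finite path into `H`. -/
def ReachSet (s r : E → V) (H : Set V) : Set V := {u : V | ∃ v ∈ H, Reach s r u v}

/-- `T(w)` : the tree rooted at `w`, i.e. the set of vertices reachable from `w`. -/
def TreeOf (s r : E → V) (w : V) : Set V := {v : V | Reach s r w v}

/-- `H^⊥ = E⁰ \ R(H)`. -/
def Hperp (s r : E → V) (H : Set V) : Set V := Set.univ \ ReachSet s r H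

/-- The hereditary and saturated closure of a set of vertices. -/
def HSClosure (s r : E → V) (X : Set V) : Set V :=
  ⋂₀ {S : Set V | X ⊆ S ∧ Hereditary s r S ∧ Saturated s r S}

/-- A cycle: a nonempty closed path whose edges have pairwise distinct sources. -/
def IsCycle (s r : E → V) (l : List E) : Prop :=
  ∃ v : V, l ≠ [] ∧ PathTo s r v v l ∧ (l.map s).Nodup

/-- A path (given as a nonempty list of edges starting at `w`) flows to `H` if its
last edge has source outside `H` and range inside `H`. -/
def FlowsTo (s r : E → V) (H : Set V) (w : V) (l : List E) : Prop :=
  (∃ u : V, PathTo s r w u l) ∧ ∃ e : E, l.getLast? = some e ∧ s e ∉ H ∧ r e ∈ H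

/-! The vertices `w` such that every `u ∈ T(w) \ H` has finitely many but at least one path
flowing to `H` form a hereditary set containing `H` (`H` being hereditary); it is saturated
because, for `u ∉ H`, the paths from `u` flowing to `H` are the edges `e` out of `u` with
`r e ∈ H` together with the paths `e :: l` with `l` flowing to `H` from `r e`, and `u` emits only
finitely many edges. Conversely, such a `w` lies in every saturated `S ⊇ H`, by induction on
a bound for the lengths of the paths from `w` flowing to `H`: `w` emits an edge, and each
out-neighbour outside `H` has a strictly smaller bound. -/

namespace PathTo

variable {V E : Type*} {s r : E → V}

lemma of_cons {u w : V} {e : E} {l : List E} (h : PathTo s r u w (e :: l)) :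
    s e = u ∧ PathTo s r (r e) w l := by
  cases h with
  | cons _ h => exact ⟨rfl, h⟩

lemma source_mem_of_hereditary {S : Set V} (hS : Hereditary s r S) {u w : V} {l : List E}
    (h : PathTo s r u w l) (hu : u ∈ S) : ∀ e ∈ l, s e ∈ S := by
  induction h with
  | nil => simp
  | cons e _ ih =>
    intro e' he'
    rcases List.mem_cons.mp he' with rfl | he'
    · exact hu
    · exact ih (hS e hu) e' he'

lemma mem_of_hereditary {S : Set V} (hS : Hereditary s r S) {u w : V} {l : List E}
    (h : PathTo s r u w l) (hu : u ∈ S) : w ∈ S := by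
  induction h with
  | nil => exact hu
  | cons e _ ih => exact ih (hS e hu)

end PathTo

lemma mem_treeOf_self {V E : Type*} (s r : E → V) (w : V) : w ∈ TreeOf s r w :=
  ⟨[], .nil w⟩

lemma treeOf_range_subset {V E : Type*} (s r : E → V) (e : E) :
    TreeOf s r (r e) ⊆ TreeOf s r (s e) :=
  fun _ ⟨l, h⟩ => ⟨e :: l, .cons e h⟩

namespace FlowsTo

variable {V E : Type*} {s r : E → V} {H : Set V} {w : V} {e : E} {l : List E}

lemma ne_nil (h : FlowsTo s r H w l) : l ≠ [] := by
  rintro rfl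
  simp [FlowsTo] at h

lemma source_eq (h : FlowsTo s r H w (e :: l)) : s e = w :=
  (h.1.choose_spec.of_cons).1

lemma not_of_mem (hH : Hereditary s r H) (hw : w ∈ H) : ¬ FlowsTo s r H w l := by
  rintro ⟨⟨u, hp⟩, e, hlast, he, -⟩
  exact he (hp.source_mem_of_hereditary hH hw e (List.mem_of_getLast? hlast))

lemma cons_iff (he : s e ∉ H) :
    FlowsTo s r H (s e) (e :: l) ↔ (l = [] ∧ r e ∈ H) ∨ FlowsTo s r H (r e) l := by
  have hpath : (∃ u, PathTo s r (s e) u (e :: l)) ↔ ∃ u, PathTo s r (r e) u l :=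
    ⟨fun ⟨u, h⟩ => ⟨u, h.of_cons.2⟩, fun ⟨u, h⟩ => ⟨u, .cons e h⟩⟩
  cases l with
  | nil =>
    have hnil : ∃ u, PathTo s r (r e) u [] := ⟨r e, .nil _⟩
    simp [FlowsTo, hpath, hnil, he]
  | cons f l =>
    simp only [FlowsTo, hpath, List.getLast?_cons_cons, reduceCtorEq, false_and, false_or]

end FlowsTo

section FlowPaths

variable {V E : Type*} (s r : E → V) (H : Set V)

def flowPaths (w : V) : Set (List E) := {l | FlowsTo s r H w l}

def flowFiniteVertices : Set V :=
  {w | ∀ u ∈ TreeOf s r w, u ∉ H → (flowPaths s r H u).Finite ∧ (flowPaths s r H u).Nonempty}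

variable {s r H}

lemma flowPaths_eq_empty_of_mem (hH : Hereditary s r H) {w : V} (hw : w ∈ H) :
    flowPaths s r H w = ∅ :=
  Set.eq_empty_of_forall_notMem fun _ => FlowsTo.not_of_mem hH hw

lemma flowPaths_subset_biUnion {w : V} (hw : w ∉ H) :
    flowPaths s r H w ⊆ ⋃ e ∈ {e | s e = w}, List.cons e '' insert [] (flowPaths s r H (r e)) := by
  rintro (_ | ⟨e, l⟩) hl
  · exact absurd rfl hl.ne_nil
  obtain rfl := hl.source_eq
  refine Set.mem_biUnion (x := e) rfl ⟨l, ?_, rfl⟩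
  rcases (FlowsTo.cons_iff hw).1 hl with ⟨rfl, -⟩ | hl'
  · exact Set.mem_insert _ _
  · exact Set.mem_insert_of_mem _ hl'

lemma flowPaths_finite (hH : Hereditary s r H) {w : V} (hw : w ∉ H)
    (hrow : {e | s e = w}.Finite)
    (h : ∀ e, s e = w → r e ∉ H → (flowPaths s r H (r e)).Finite) :
    (flowPaths s r H w).Finite := by
  refine .subset (hrow.biUnion fun e he => .image _ (.insert _ ?_)) (flowPaths_subset_biUnion hw)
  by_cases hre : r e ∈ H
  · simp [flowPaths_eq_empty_of_mem hH hre]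
  · exact h e he hre

lemma flowPaths_nonempty {w : V} (hw : w ∉ H) {e : E} (he : s e = w)
    (h : r e ∉ H → (flowPaths s r H (r e)).Nonempty) : (flowPaths s r H w).Nonempty := by
  subst he
  by_cases hre : r e ∈ H
  · exact ⟨[e], (FlowsTo.cons_iff hw).2 (.inl ⟨rfl, hre⟩)⟩
  · obtain ⟨l, hl⟩ := h hre
    exact ⟨e :: l, (FlowsTo.cons_iff hw).2 (.inr hl)⟩

lemma subset_flowFiniteVertices (hH : Hereditary s r H) : H ⊆ flowFiniteVertices s r H :=
  fun _ hw _ ⟨_, hp⟩ hu => (hu (hp.mem_of_hereditary hH hw)).elim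

lemma hereditary_flowFiniteVertices : Hereditary s r (flowFiniteVertices s r H) :=
  fun e he u hu => he u (treeOf_range_subset s r e hu)

lemma saturated_flowFiniteVertices (hrow : ∀ v : V, {e : E | s e = v}.Finite)
    (hH : Hereditary s r H) : Saturated s r (flowFiniteVertices s r H) := by
  rintro w ⟨e₀, he₀⟩ hall _ ⟨l, hp⟩ hu
  cases hp with
  | nil =>
    refine ⟨flowPaths_finite hH hu (hrow _) fun e he hre => ?_,
      flowPaths_nonempty hu he₀ fun hre => ?_⟩
    · exact (hall e he _ (mem_treeOf_self s r _) hre).1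
    · exact (hall e₀ he₀ _ (mem_treeOf_self s r _) hre).2
  | cons e hp => exact hall e rfl _ ⟨_, hp⟩ hu

lemma hsClosure_subset_flowFiniteVertices (hrow : ∀ v : V, {e : E | s e = v}.Finite)
    (hH : Hereditary s r H) : HSClosure s r H ⊆ flowFiniteVertices s r H :=
  Set.sInter_subset_of_mem ⟨subset_flowFiniteVertices hH, hereditary_flowFiniteVertices,
    saturated_flowFiniteVertices hrow hH⟩

lemma mem_of_flowPaths_length_le {S : Set V} (hHS : H ⊆ S) (hS : Saturated s r S) (m : ℕ) :
    ∀ w ∈ flowFiniteVertices s r H, (∀ l ∈ flowPaths s r H w, l.length ≤ m) → w ∈ S := by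
  induction m with
  | zero =>
    intro w hw hlen
    by_contra hwS
    obtain ⟨l, hl⟩ := (hw w (mem_treeOf_self s r w) fun h => hwS (hHS h)).2
    exact hl.ne_nil (List.eq_nil_of_length_eq_zero (Nat.le_zero.mp (hlen l hl)))
  | succ m ih =>
    intro w hw hlen
    by_cases hwH : w ∈ H
    · exact hHS hwH
    obtain ⟨_ | ⟨e₀, l₀⟩, hl₀⟩ := (hw w (mem_treeOf_self s r w) hwH).2
    · exact absurd rfl hl₀.ne_nil
    refine hS w ⟨e₀, hl₀.source_eq⟩ fun e he => ?_
    by_cases hre : r e ∈ H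
    · exact hHS hre
    subst he
    refine ih (r e) (fun u hu => hw u (treeOf_range_subset s r e hu)) fun l hl => ?_
    simpa using hlen (e :: l) ((FlowsTo.cons_iff hwH).2 (.inr hl))

lemma flowFiniteVertices_subset_hsClosure : flowFiniteVertices s r H ⊆ HSClosure s r H := by
  rintro w hw S ⟨hHS, -, hS⟩
  by_cases hwH : w ∈ H
  · exact hHS hwH
  obtain ⟨m, hm⟩ := ((hw w (mem_treeOf_self s r w) hwH).1.image List.length).bddAbove
  exact mem_of_flowPaths_length_le hHS hS m w hw fun l hl => hm ⟨l, hl, rfl⟩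

theorem hsClosure_eq_flowFiniteVertices (hrow : ∀ v : V, {e : E | s e = v}.Finite)
    (hH : Hereditary s r H) : HSClosure s r H = flowFiniteVertices s r H :=
  (hsClosure_subset_flowFiniteVertices hrow hH).antisymm flowFiniteVertices_subset_hsClosure

end FlowPaths

theorem stmt_8_general {V E : Type*} (s r : E → V)
    (hrow : ∀ v : V, {e : E | s e = v}.Finite)
    (H : Set V) (hH : Hereditary s r H) (v : V) :
    v ∈ HSClosure s r H ↔
      ∀ w ∈ TreeOf s r v, w ∉ H →
        ({l : List E | FlowsTo s r H w l}.Finite ∧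
          {l : List E | FlowsTo s r H w l}.Nonempty) :=
  Set.ext_iff.mp (hsClosure_eq_flowFiniteVertices hrow hH) v

theorem stmt_8 {V E : Type*} (s r : E → V)
    (hrow : ∀ v : V, {e : E | s e = v}.Finite)
    (H : Set V) (hH : Hereditary s r H) (v : V) (hv : v ∉ H) :
    v ∈ HSClosure s r H ↔
      ∀ w ∈ TreeOf s r v, w ∉ H →
        ({l : List E | FlowsTo s r H w l}.Finite ∧
          {l : List E | FlowsTo s r H w l}.Nonempty) :=
  stmt_8_general s r hrow H hH v
end

section
/- Let E be a finite graph containing a cycle c that has an exit with no return to c. Then there exists a hereditary saturated subset H of E⁰ that is not regular, i.e., H^⊥⊥ ≠ H. Concretely, one may take H to be the hereditary saturated closure of X = {v ∈ E⁰ | there is a path from c⁰ to v but no path from v to c⁰}. -/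
variable {V E : Type*}

/-! Let `X` be the set of vertices reachable from `c⁰` that cannot return to `c⁰`, and `H` its
hereditary saturated closure. The vertices that cannot return to `c⁰` form a hereditary
saturated set, so `H` misses `c⁰`, in particular the source of the exit `f`. On the other hand
every vertex `v` reachable from `s f` reaches `X`: if `v` returns to `c⁰` it goes on around the
cycle and along `f` to `r f ∈ X`, and otherwise `v ∈ X` itself. Hence `s f ∈ H^⊥⊥ \ H`. -/

namespace PathTo

variable {s r : E → V} {u w : V} {l : List E} {e : E}

theorem reach_source_of_mem (h : PathTo s r u w l) (he : e ∈ l) : Reach s r u (s e) := by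
  induction h with
  | nil => cases he
  | cons e₀ _ ih =>
    rcases List.mem_cons.mp he with rfl | he
    · exact ⟨[], .nil _⟩
    · obtain ⟨l', hl'⟩ := ih he
      exact ⟨e₀ :: l', .cons e₀ hl'⟩

theorem reach_range_of_mem (h : PathTo s r u w l) (he : e ∈ l) : Reach s r (r e) w := by
  induction h with
  | nil => cases he
  | cons e₀ hp ih =>
    rcases List.mem_cons.mp he with rfl | he
    · exact ⟨_, hp⟩
    · exact ih he

theorem append {l' : List E} {x : V} (h : PathTo s r u w l) (h' : PathTo s r w x l') :
    PathTo s r u x (l ++ l') := by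
  induction h with
  | nil => exact h'
  | cons e _ ih => exact .cons e (ih h')

end PathTo

namespace Reach

variable {s r : E → V} {u v w : V}

theorem refl (u : V) : Reach s r u u := ⟨[], .nil u⟩

theorem trans (h : Reach s r u v) (h' : Reach s r v w) : Reach s r u w :=
  let ⟨l, hl⟩ := h
  let ⟨l', hl'⟩ := h'
  ⟨l ++ l', hl.append hl'⟩

theorem of_edge (e : E) : Reach s r (s e) (r e) := ⟨[e], .cons e (.nil _)⟩

end Reach

section Perp

variable {s r : E → V} {X Y H : Set V}

theorem subset_reachSet : X ⊆ ReachSet s r X := fun v hv => ⟨v, hv, .refl v⟩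

theorem reachSet_mono (h : X ⊆ Y) : ReachSet s r X ⊆ ReachSet s r Y :=
  fun _ ⟨v, hv, hr⟩ => ⟨v, h hv, hr⟩

theorem hereditary_hperp (H : Set V) : Hereditary s r (Hperp s r H) :=
  fun e he => ⟨trivial, fun ⟨v, hv, hr⟩ => he.2 ⟨v, hv, (Reach.of_edge e).trans hr⟩⟩

theorem saturated_hperp (hH : ∀ v ∈ H, ∃ e, s e = v ∧ r e ∈ ReachSet s r H) :
    Saturated s r (Hperp s r H) := by
  refine fun v _ hall => ⟨trivial, ?_⟩
  rintro ⟨w, hw, l, hl⟩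
  cases hl with
  | nil =>
    obtain ⟨e, rfl, hre⟩ := hH v hw
    exact (hall e rfl).2 hre
  | cons e hp => exact (hall e rfl).2 ⟨w, hw, _, hp⟩

theorem mem_hperp_hperp_of_treeOf_subset {w : V} (h : TreeOf s r w ⊆ ReachSet s r H) :
    w ∈ Hperp s r (Hperp s r H) :=
  ⟨trivial, fun ⟨_, hv, hwv⟩ => hv.2 (h hwv)⟩

end Perp

section Closure

variable {s r : E → V}

theorem subset_hsClosure (X : Set V) : X ⊆ HSClosure s r X :=
  fun _ hv => Set.mem_sInter.mpr fun _ hS => hS.1 hv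

theorem hereditary_hsClosure (X : Set V) : Hereditary s r (HSClosure s r X) :=
  fun e he => Set.mem_sInter.mpr fun S hS => hS.2.1 e (Set.mem_sInter.mp he S hS)

theorem saturated_hsClosure (X : Set V) : Saturated s r (HSClosure s r X) :=
  fun v hreg hall => Set.mem_sInter.mpr fun S hS =>
    hS.2.2 v hreg fun e hse => Set.mem_sInter.mp (hall e hse) S hS

theorem hsClosure_subset_of {X S : Set V} (hX : X ⊆ S) (hher : Hereditary s r S)
    (hsat : Saturated s r S) : HSClosure s r X ⊆ S :=
  Set.sInter_subset_of_mem ⟨hX, hher, hsat⟩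

end Closure

section Cycle

variable {s r : E → V} {c : List E}

def cycleVertices (s : E → V) (c : List E) : Set V := {v | ∃ e ∈ c, s e = v}

theorem mem_hperp_cycleVertices {v : V} :
    v ∈ Hperp s r (cycleVertices s c) ↔ ¬ ∃ e ∈ c, Reach s r v (s e) := by
  simp [Hperp, ReachSet, cycleVertices]

theorem IsCycle.reach_range_source (hc : IsCycle s r c) {e e' : E} (he : e ∈ c)
    (he' : e' ∈ c) : Reach s r (r e) (s e') :=
  let ⟨_, _, hpath, _⟩ := hc
  (hpath.reach_range_of_mem he).trans (hpath.reach_source_of_mem he')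

theorem IsCycle.reach_source (hc : IsCycle s r c) {e e' : E} (he : e ∈ c) (he' : e' ∈ c) :
    Reach s r (s e) (s e') :=
  (Reach.of_edge e).trans (hc.reach_range_source he he')

theorem IsCycle.saturated_hperp (hc : IsCycle s r c) :
    Saturated s r (Hperp s r (cycleVertices s c)) :=
  _root_.saturated_hperp fun _ ⟨e, he, hv⟩ =>
    ⟨e, hv, s e, ⟨e, he, rfl⟩, hc.reach_range_source he he⟩

end Cycle

theorem stmt_17_general {V E : Type*} (s r : E → V)
    (c : List E) (hc : IsCycle s r c)
    (f : E) (hexit : (∃ e ∈ c, s e = s f) ∧ f ∉ c)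
    (hnoreturn : ¬ ∃ e ∈ c, Reach s r (r f) (s e)) :
    ∃ H : Set V, Hereditary s r H ∧ Saturated s r H ∧
      Hperp s r (Hperp s r H) ≠ H ∧
      H = HSClosure s r
        {v : V | (∃ e ∈ c, Reach s r (s e) v) ∧ ¬ ∃ e ∈ c, Reach s r v (s e)} := by
  obtain ⟨⟨e, hec, hse⟩, -⟩ := hexit
  set X : Set V := {v : V | (∃ e ∈ c, Reach s r (s e) v) ∧ ¬ ∃ e ∈ c, Reach s r v (s e)}
  have hH : HSClosure s r X ⊆ Hperp s r (cycleVertices s c) :=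
    hsClosure_subset_of (fun v hv => mem_hperp_cycleVertices.mpr hv.2) (hereditary_hperp _)
      hc.saturated_hperp
  have hsf : s f ∉ HSClosure s r X := fun h => (hH h).2 (subset_reachSet ⟨e, hec, hse⟩)
  have hrf : r f ∈ X := ⟨⟨e, hec, hse ▸ Reach.of_edge f⟩, hnoreturn⟩
  have htree : TreeOf s r (s f) ⊆ ReachSet s r X := by
    intro v hv
    by_cases hvc : ∃ e' ∈ c, Reach s r v (s e')
    · obtain ⟨e', he'c, hv'⟩ := hvc
      exact ⟨r f, hrf, hv'.trans ((hc.reach_source he'c hec).trans (hse ▸ Reach.of_edge f))⟩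
    · exact ⟨v, ⟨⟨e, hec, hse ▸ hv⟩, hvc⟩, .refl v⟩
  refine ⟨_, hereditary_hsClosure X, saturated_hsClosure X, fun heq => hsf ?_, rfl⟩
  exact heq ▸ mem_hperp_hperp_of_treeOf_subset (htree.trans (reachSet_mono (subset_hsClosure X)))

theorem stmt_17 {V E : Type*} [Finite V] [Finite E] (s r : E → V)
    (c : List E) (hc : IsCycle s r c)
    (f : E) (hexit : (∃ e ∈ c, s e = s f) ∧ f ∉ c)
    (hnoreturn : ¬ ∃ e ∈ c, Reach s r (r f) (s e)) :
    ∃ H : Set V, Hereditary s r H ∧ Saturated s r H ∧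
      Hperp s r (Hperp s r H) ≠ H ∧
      H = HSClosure s r
        {v : V | (∃ e ∈ c, Reach s r (s e) v) ∧ ¬ ∃ e ∈ c, Reach s r v (s e)} :=
  stmt_17_general s r c hc f hexit hnoreturn
end
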